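/- arXiv:1101.1512 — 4 statements merged into one kernel-verified Lean document; each statement's English description precedes it below -/
import Mathlib

section
/- Let u : [0,1/2] → ℝ satisfy ∫_0^{1/2} u = ∫_0^{1/2} x u(x) dx = ∫_0^{1/2} x^2 u(x) dx = 0, and define f(x,y) = u(x) for x ∈ [0,1/2] and f(x,y) = u(x - 1/2) for x ∈ (1/2, 1]. Let T be a triangle whose vertices have first coordinates (0, 1/2, 1). Then ∫_T f(x,y) v(x,y) dxdy = 0 for every affine function v(x,y) = α + βx + γy. -/
/-!
Since `f` depends on `x` only, slicing `T` vertically gives `∫_T f v = ∫_0^1 f(x, ·) q(x) dx` with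
`q(x) = ∫_{T_x} v(x, y) dy`. Writing the points of the vertical line through `x` as
`y = (1-x) y₁ + x y₃ - (y₁ - 2y₂ + y₃) s`, the slice `T_x` is `0 ≤ s ≤ min(x, 1-x)`, so `q` is a
quadratic polynomial on each of `[0,1/2]` and `[1/2,1]`. On the first half `f = u`, on the second
`f` is `u` shifted by `1/2`, and both pieces vanish because `u` is orthogonal to all polynomials of
degree at most `2`.
-/

open MeasureTheory Set Polynomial

namespace intervalIntegral

theorem integral_mul_eval_eq_zero {u : ℝ → ℝ} {a b : ℝ} {n : ℕ}
    (hu : IntervalIntegrable u volume a b) (horth : ∀ k ≤ n, ∫ x in a..b, x ^ k * u x = 0)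
    {p : ℝ[X]} (hp : p.natDegree ≤ n) :
    ∫ x in a..b, u x * p.eval x = 0 := by
  have hmon : ∀ k, IntervalIntegrable (fun x => p.coeff k * (x ^ k * u x)) volume a b :=
    fun k => (hu.continuousOn_mul (continuous_pow k).continuousOn).const_mul _
  calc ∫ x in a..b, u x * p.eval x
      = ∫ x in a..b, ∑ k ∈ Finset.range (n + 1), p.coeff k * (x ^ k * u x) := by
        refine integral_congr fun x _ => ?_
        rw [eval_eq_sum_range' (Nat.lt_succ_of_le hp), Finset.mul_sum]
        exact Finset.sum_congr rfl fun k _ => by ring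
    _ = 0 := by
        rw [integral_finsetSum fun k _ => hmon k]
        refine Finset.sum_eq_zero fun k hk => ?_
        rw [integral_const_mul, horth k (Nat.lt_succ_iff.1 (Finset.mem_range.1 hk)), mul_zero]

theorem integral_comp_sub_mul_eval_eq_zero {u : ℝ → ℝ} {a b : ℝ} {n : ℕ}
    (hu : IntervalIntegrable u volume a b) (horth : ∀ k ≤ n, ∫ x in a..b, x ^ k * u x = 0)
    {p : ℝ[X]} (hp : p.natDegree ≤ n) (c : ℝ) :
    ∫ x in a + c..b + c, u (x - c) * p.eval x = 0 := by
  have hpc : (p.comp (X + C c)).natDegree ≤ n := by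
    rwa [natDegree_comp, natDegree_X_add_C, mul_one]
  have hshift := integral_comp_sub_right
    (fun x => u x * (p.comp (X + C c)).eval x) (a := a + c) (b := b + c) c
  have hzero := integral_mul_eval_eq_zero hu horth hpc
  simp only [eval_comp, eval_add, eval_X, eval_C, sub_add_cancel, add_sub_cancel_right]
    at hshift hzero
  rw [hshift, hzero]

theorem integral_eq_zero_of_eqOn_mul_eval {u φ : ℝ → ℝ} {a b c e : ℝ} {n : ℕ}
    (hu : IntervalIntegrable u volume a b) (horth : ∀ k ≤ n, ∫ x in a..b, x ^ k * u x = 0)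
    (hab : a ≤ b) (hb : a + c = b) (he : b + c = e) {P Q : ℝ[X]} (hP : P.natDegree ≤ n)
    (hQ : Q.natDegree ≤ n) (hφP : ∀ x ∈ Ioc a b, φ x = u x * P.eval x)
    (hφQ : ∀ x ∈ Ioc b e, φ x = u (x - c) * Q.eval x) :
    ∫ x in a..e, φ x = 0 := by
  have hbe : b ≤ e := by linarith
  have hφP' : ∀ᵐ x ∂volume, x ∈ uIoc a b → φ x = u x * P.eval x :=
    ae_of_all _ fun x hx => hφP x (uIoc_of_le hab ▸ hx)
  have hφQ' : ∀ᵐ x ∂volume, x ∈ uIoc b e → φ x = u (x - c) * Q.eval x :=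
    ae_of_all _ fun x hx => hφQ x (uIoc_of_le hbe ▸ hx)
  have hintP : IntervalIntegrable φ volume a b :=
    (hu.mul_continuousOn P.continuous.continuousOn).congr_ae
      ((ae_restrict_iff' measurableSet_uIoc).2 (hφP'.mono fun x h hx => (h hx).symm))
  have hintQ : IntervalIntegrable φ volume b e := by
    have hu' := hu.comp_sub_right c
    rw [hb, he] at hu'
    exact (hu'.mul_continuousOn Q.continuous.continuousOn).congr_ae
      ((ae_restrict_iff' measurableSet_uIoc).2 (hφQ'.mono fun x h hx => (h hx).symm))
  have hQ0 := integral_comp_sub_mul_eval_eq_zero hu horth hQ c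
  rw [hb, he] at hQ0
  rw [← integral_add_adjacent_intervals hintP hintQ, integral_congr_ae hφP',
    integral_congr_ae hφQ', integral_mul_eval_eq_zero hu horth hP, hQ0, add_zero]

end intervalIntegral

theorem integral_comp_sub_div {E : Type*} [NormedAddCommGroup E] [NormedSpace ℝ E]
    (g : ℝ → E) (c a : ℝ) :
    ∫ y, g ((c - y) / a) = |a| • ∫ s, g s := by
  rw [integral_sub_left_eq_self (fun y => g (y / a)) volume c, Measure.integral_comp_div]

theorem integral_Icc_affine {w : ℝ} (hw : 0 ≤ w) (a b : ℝ) :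
    ∫ s in Icc 0 w, (a + b * s) = w * a + b * w ^ 2 / 2 := by
  rw [integral_Icc_eq_integral_Ioc, ← intervalIntegral.integral_of_le hw,
    intervalIntegral.integral_add intervalIntegrable_const
      (intervalIntegral.intervalIntegrable_id.const_mul b),
    intervalIntegral.integral_const_mul, integral_id]
  simp only [intervalIntegral.integral_const, sub_zero, smul_eq_mul]
  ring

theorem mem_convexHull_triple_iff {R E : Type*} [Field R] [LinearOrder R] [IsStrictOrderedRing R]
    [AddCommGroup E] [Module R E] {a b c x : E} :
    x ∈ convexHull R {a, b, c} ↔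
      ∃ p q r : R, 0 ≤ p ∧ 0 ≤ q ∧ 0 ≤ r ∧ p + q + r = 1 ∧ p • a + q • b + r • c = x := by
  constructor
  · rw [convexHull_insert (insert_nonempty b {c}), convexHull_pair, mem_convexJoin]
    rintro ⟨a', rfl, _, ⟨q, r, hq, hr, hqr, rfl⟩, ⟨p, t, hp, ht, hpt, rfl⟩⟩
    refine ⟨p, t * q, t * r, hp, by positivity, by positivity, ?_, ?_⟩
    · linear_combination t * hqr + hpt
    · rw [smul_add, smul_smul, smul_smul, add_assoc]
  · rintro ⟨p, q, r, hp, hq, hr, hpqr, rfl⟩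
    refine mem_convexHull_of_exists_fintype ![p, q, r] ![a, b, c] (fun i => ?_) ?_ ?_ ?_
    · fin_cases i <;> assumption
    · simpa [Fin.sum_univ_three] using hpqr
    · intro i; fin_cases i <;> simp
    · simp [Fin.sum_univ_three]

section Triangle

variable {E : Type*} [NormedAddCommGroup E] [NormedSpace ℝ E] {y₁ y₂ y₃ : ℝ}

theorem sub_two_mul_add_ne_zero_of_affineIndependent
    (h : AffineIndependent ℝ ![((0:ℝ), y₁), ((1/2 : ℝ), y₂), ((1:ℝ), y₃)]) :
    y₁ - 2 * y₂ + y₃ ≠ 0 := by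
  intro hd
  have := h.eq_zero_of_sum_eq_zero (s := Finset.univ) (w := ![1, -2, 1])
    (by simp [Fin.sum_univ_three]; norm_num)
    (by ext <;> simp [Fin.sum_univ_three]; linarith) 0 (Finset.mem_univ _)
  simp at this

theorem fst_mem_Icc_of_mem_convexHull {p : ℝ × ℝ}
    (hp : p ∈ convexHull ℝ {((0:ℝ), y₁), ((1/2 : ℝ), y₂), ((1:ℝ), y₃)}) : p.1 ∈ Icc 0 1 :=
  (convexHull_min (by simp [insert_subset_iff]; norm_num)
    ((convex_Icc 0 1).prod convex_univ) hp).1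

-- The quotient `s` is half the barycentric weight of `(1/2, y₂)`; those of `(0, y₁)` and
-- `(1, y₃)` are `1 - p.1 - s` and `p.1 - s`.
theorem mem_convexHull_iff_div_mem_Icc (hd : y₁ - 2 * y₂ + y₃ ≠ 0) {p : ℝ × ℝ} :
    p ∈ convexHull ℝ {((0:ℝ), y₁), ((1/2 : ℝ), y₂), ((1:ℝ), y₃)} ↔
      ((1 - p.1) * y₁ + p.1 * y₃ - p.2) / (y₁ - 2 * y₂ + y₃) ∈ Icc 0 (min p.1 (1 - p.1)) := by
  obtain ⟨x, y⟩ := p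
  rw [mem_convexHull_triple_iff]
  constructor
  · rintro ⟨a, b, c, ha, hb, hc, habc, hp⟩
    simp only [Prod.ext_iff, Prod.fst_add, Prod.snd_add, Prod.smul_fst, Prod.smul_snd,
      smul_eq_mul] at hp
    have hs : ((1 - x) * y₁ + x * y₃ - y) / (y₁ - 2 * y₂ + y₃) = b / 2 := by
      rw [div_eq_iff hd, ← hp.1, ← hp.2]; linear_combination (-y₁) * habc
    rw [hs]
    exact ⟨by linarith, le_min (by linarith) (by linarith)⟩
  · rintro ⟨hs0, hs⟩
    set s := ((1 - x) * y₁ + x * y₃ - y) / (y₁ - 2 * y₂ + y₃) with hs_def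
    have hy : y = (1 - x) * y₁ + x * y₃ - s * (y₁ - 2 * y₂ + y₃) := by
      rw [hs_def, div_mul_cancel₀ _ hd]; ring
    clear_value s
    rw [le_min_iff] at hs
    refine ⟨1 - x - s, 2 * s, x - s, by linarith, by linarith, by linarith, by ring, ?_⟩
    ext <;> simp only [Prod.fst_add, Prod.snd_add, Prod.smul_fst, Prod.smul_snd, smul_eq_mul]
    · ring
    · linear_combination -hy

theorem setIntegral_convexHull_eq_intervalIntegral {F : ℝ × ℝ → E}
    (hF : IntegrableOn F (convexHull ℝ {((0:ℝ), y₁), ((1/2 : ℝ), y₂), ((1:ℝ), y₃)})) :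
    ∫ p in convexHull ℝ {((0:ℝ), y₁), ((1/2 : ℝ), y₂), ((1:ℝ), y₃)}, F p =
      ∫ x in (0:ℝ)..1,
        ∫ y, (convexHull ℝ {((0:ℝ), y₁), ((1/2 : ℝ), y₂), ((1:ℝ), y₃)}).indicator F (x, y) := by
  have hT := ((toFinite {((0:ℝ), y₁), ((1/2 : ℝ), y₂), ((1:ℝ), y₃)}).isCompact_convexHull
    ℝ).isClosed.measurableSet
  have hout : ∀ x ∉ Icc (0:ℝ) 1, ∫ y,
      (convexHull ℝ {((0:ℝ), y₁), ((1/2 : ℝ), y₂), ((1:ℝ), y₃)}).indicator F (x, y) = 0 :=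
    fun x hx => by
      have hxT : ∀ y, (x, y) ∉ convexHull ℝ {((0:ℝ), y₁), ((1/2 : ℝ), y₂), ((1:ℝ), y₃)} :=
        fun y hp => hx (fst_mem_Icc_of_mem_convexHull hp)
      simp only [indicator_of_notMem (hxT _), integral_zero]
  rw [← integral_indicator hT, Measure.volume_eq_prod,
    integral_prod _ ((integrable_indicator_iff hT).2 hF),
    ← setIntegral_eq_integral_of_forall_compl_eq_zero hout, integral_Icc_eq_integral_Ioc,
    ← intervalIntegral.integral_of_le zero_le_one]

theorem integral_indicator_convexHull (hd : y₁ - 2 * y₂ + y₃ ≠ 0) (F : ℝ × ℝ → E) (x : ℝ) :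
    ∫ y, (convexHull ℝ {((0:ℝ), y₁), ((1/2 : ℝ), y₂), ((1:ℝ), y₃)}).indicator F (x, y) =
      |y₁ - 2 * y₂ + y₃| •
        ∫ s in Icc 0 (min x (1 - x)), F (x, (1 - x) * y₁ + x * y₃ - (y₁ - 2 * y₂ + y₃) * s) := by
  rw [← integral_indicator measurableSet_Icc, ← integral_comp_sub_div _ ((1 - x) * y₁ + x * y₃)]
  congr 1 with y
  simp only [indicator, mem_convexHull_iff_div_mem_Icc hd]
  rw [mul_div_cancel₀ _ hd, sub_sub_cancel]

theorem integral_indicator_convexHull_mul_affine (hd : y₁ - 2 * y₂ + y₃ ≠ 0)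
    (g : ℝ → ℝ) (α β γ : ℝ) {x : ℝ} (hx : x ∈ Icc 0 1) :
    ∫ y, (convexHull ℝ {((0:ℝ), y₁), ((1/2 : ℝ), y₂), ((1:ℝ), y₃)}).indicator
        (fun p => g p.1 * (α + β * p.1 + γ * p.2)) (x, y) =
      g x * (|y₁ - 2 * y₂ + y₃| * (min x (1 - x) * (α + β * x + γ * ((1 - x) * y₁ + x * y₃))
        - γ * (y₁ - 2 * y₂ + y₃) * min x (1 - x) ^ 2 / 2)) := by
  have hw : 0 ≤ min x (1 - x) := le_min hx.1 (sub_nonneg.2 hx.2)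
  have hv : ∀ s : ℝ, g x * (α + β * x + γ * ((1 - x) * y₁ + x * y₃ - (y₁ - 2 * y₂ + y₃) * s)) =
      g x * ((α + β * x + γ * ((1 - x) * y₁ + x * y₃)) + -(γ * (y₁ - 2 * y₂ + y₃)) * s) :=
    fun s => by ring
  simp only [integral_indicator_convexHull hd, hv, integral_const_mul, integral_Icc_affine hw,
    smul_eq_mul]
  ring

end Triangle

/-- if `u` on `[0,1/2]` is orthogonal to `1, x, x²`, and
`f(x,y) = u(x)` for `x ∈ [0,1/2]`, `f(x,y) = u(x-1/2)` for `x ∈ (1/2,1]`,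
then `∫_T f·v = 0` for every affine `v`, where `T` is a triangle whose
vertices have first coordinates `0, 1/2, 1`. -/
theorem orthogonality_on_triangle
    (u : ℝ → ℝ)
    (hu_int : IntervalIntegrable u volume 0 (1/2))
    (h0 : (∫ x in (0:ℝ)..(1/2), u x) = 0)
    (h1 : (∫ x in (0:ℝ)..(1/2), x * u x) = 0)
    (h2 : (∫ x in (0:ℝ)..(1/2), x^2 * u x) = 0)
    (f : ℝ × ℝ → ℝ)
    (hf : ∀ p : ℝ × ℝ, f p = if p.1 ≤ 1/2 then u p.1 else u (p.1 - 1/2))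
    (y₁ y₂ y₃ : ℝ)
    (T : Set (ℝ × ℝ))
    (hT : T = convexHull ℝ {((0:ℝ), y₁), ((1/2 : ℝ), y₂), ((1:ℝ), y₃)})
    (hT_nondeg : AffineIndependent ℝ ![((0:ℝ), y₁), ((1/2 : ℝ), y₂), ((1:ℝ), y₃)])
    (hfT : IntegrableOn f T volume)
    (α β γ : ℝ) :
    ∫ p in T, f p * (α + β * p.1 + γ * p.2) = 0 := by
  have hd := sub_two_mul_add_ne_zero_of_affineIndependent hT_nondeg
  have horth : ∀ k ≤ 2, ∫ x in (0:ℝ)..(1/2), x ^ k * u x = 0 := by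
    intro k hk
    interval_cases k <;> simpa only [pow_zero, one_mul, pow_one]
  subst hT
  have hfv := hfT.mul_continuousOn (by fun_prop : Continuous fun p : ℝ × ℝ =>
    α + β * p.1 + γ * p.2).continuousOn ((toFinite _).isCompact_convexHull ℝ)
  set g : ℝ → ℝ := fun x => if x ≤ 1/2 then u x else u (x - 1/2)
  rw [setIntegral_convexHull_eq_intervalIntegral hfv, show f = fun p => g p.1 from funext hf]
  -- `(P W).eval x = ∫_{T_x} v(x, y) dy` wherever `min x (1 - x) = W.eval x`.
  set P : ℝ[X] → ℝ[X] := fun W => C |y₁ - 2 * y₂ + y₃| *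
    (W * (C α + C β * X + C γ * (C y₁ + C (y₃ - y₁) * X)) - C (γ * (y₁ - 2 * y₂ + y₃) / 2) * W ^ 2)
  refine intervalIntegral.integral_eq_zero_of_eqOn_mul_eval (c := 1/2) hu_int horth
    (by norm_num) (by norm_num) (by norm_num) (P := P X) (Q := P (1 - X))
    (by simp only [P]; compute_degree!) (by simp only [P]; compute_degree!) ?_ ?_
  · rintro x ⟨hx0, hx1⟩
    rw [integral_indicator_convexHull_mul_affine hd g _ _ _ ⟨hx0.le, by linarith⟩,
      min_eq_left (by linarith), show g x = u x from if_pos hx1]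
    simp only [P, eval_mul, eval_sub, eval_add, eval_pow, eval_C, eval_X]
    ring
  · rintro x ⟨hx0, hx1⟩
    rw [integral_indicator_convexHull_mul_affine hd g _ _ _ ⟨by linarith, hx1⟩,
      min_eq_right (by linarith), show g x = u (x - 1/2) from if_neg (not_le.2 hx0)]
    simp only [P, eval_mul, eval_sub, eval_add, eval_pow, eval_C, eval_X, eval_one]
    ring
end

section
/- Let (q_n)_{n=0}^{j-1} be a sequence with values in {1,2}, let r be the number of indices n with q_n = 2, let k ≥ 1, and let l be the maximal number of disjoint consecutive sub-chains of the form (ν₁, 2, ν₂, …, ν_q, 2) with ν_i ∈ {1,2} and total length q+2 ≤ 2k+3 that can be extracted from the sequence. Then r ≤ 3l + 3 + (j − r)/(2k). -/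
/-!
Let `x₀ < x₁ < ⋯` be the positions of the entries `2`. Discard `x₀`, so that every remaining
position has a predecessor, and scan the remaining positions greedily. If the next two of them, `a < b`, satisfy `b - a ≤ 2k + 1`, the interval
`[a - 1, b]` is an admissible block; take it, and discard the position after `b` as well, so that
the next block cannot overlap it. Otherwise `a` and `b` enclose at least `2k` entries different
from `2`; discard `a` and count a long gap. Each block uses up three positions and each long gap
one, so `r ≤ 3l + g + 2` for `g` long gaps; these enclose disjoint runs of non-`2` entries, so
`2kg ≤ j - r`.
-/

/-- Returns the chosen blocks, `(start, length)`, and the number of long gaps. -/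
def greedyBlocks (k : ℕ) : List ℕ → List (ℕ × ℕ) × ℕ
  | [] => ([], 0)
  | [_] => ([], 0)
  | a :: b :: t =>
      if b ≤ a + 2 * k + 1 then
        ((a - 1, b - a + 2) :: (greedyBlocks k t.tail).1, (greedyBlocks k t.tail).2)
      else
        ((greedyBlocks k (b :: t)).1, (greedyBlocks k (b :: t)).2 + 1)
termination_by M => M.length

lemma add_two_le_of_mem_tail {b x : ℕ} {t : List ℕ} (h : (b :: t).Pairwise (· < ·))
    (hx : x ∈ t.tail) : b + 2 ≤ x := by
  obtain _ | ⟨c, t⟩ := t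
  · simp at hx
  · have hbc : b < c := List.rel_of_pairwise_cons h (by simp)
    have hcx : c < x := List.rel_of_pairwise_cons h.of_cons hx
    omega

namespace greedyBlocks

variable (k : ℕ)

theorem length_le (M : List ℕ) :
    M.length ≤ 3 * (greedyBlocks k M).1.length + (greedyBlocks k M).2 + 1 := by
  induction M using greedyBlocks.induct k with
  | case1 | case2 => simp [greedyBlocks]
  | case3 a b t hshort ih =>
    have : t.length ≤ t.tail.length + 1 := by cases t <;> simp
    simp only [greedyBlocks, if_pos hshort, List.length_cons]
    omega
  | case4 a b t hlong ih =>
    simp only [greedyBlocks, if_neg hlong, List.length_cons] at ih ⊢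
    omega

theorem blocks_spec {M : List ℕ} (hM : M.Pairwise (· < ·)) (hpos : ∀ x ∈ M, 1 ≤ x) :
    ∀ p ∈ (greedyBlocks k M).1,
      p.1 + 1 ∈ M ∧ p.1 + p.2 - 1 ∈ M ∧ 2 ≤ p.2 ∧ p.2 ≤ 2 * k + 3 := by
  induction M using greedyBlocks.induct k with
  | case1 | case2 => simp [greedyBlocks]
  | case3 a b t hshort ih =>
    simp only [greedyBlocks, if_pos hshort, List.forall_mem_cons]
    have ha := hpos a (by simp)
    have hab : a < b := List.rel_of_pairwise_cons hM (by simp)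
    refine ⟨?_, fun p hp => ?_⟩
    · refine ⟨by simp [Nat.sub_add_cancel ha], ?_, by omega, by omega⟩
      rw [show a - 1 + (b - a + 2) - 1 = b by omega]
      simp
    · have hsub : ∀ x ∈ t.tail, x ∈ a :: b :: t := fun x hx =>
        .tail a (.tail b (List.mem_of_mem_tail hx))
      obtain ⟨h1, h2, h3⟩ := ih hM.of_cons.of_cons.tail (fun x hx => hpos x (hsub x hx)) p hp
      exact ⟨hsub _ h1, hsub _ h2, h3⟩
  | case4 a b t hlong ih =>
    simp only [greedyBlocks, if_neg hlong]
    intro p hp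
    obtain ⟨h1, h2, h3⟩ := ih hM.of_cons (fun x hx => hpos x (.tail a hx)) p hp
    exact ⟨.tail a h1, .tail a h2, h3⟩

theorem pairwise_blocks {M : List ℕ} (hM : M.Pairwise (· < ·)) (hpos : ∀ x ∈ M, 1 ≤ x) :
    (greedyBlocks k M).1.Pairwise fun p p' => p.1 + p.2 ≤ p'.1 := by
  induction M using greedyBlocks.induct k with
  | case1 | case2 => simp [greedyBlocks]
  | case3 a b t hshort ih =>
    simp only [greedyBlocks, if_pos hshort, List.pairwise_cons]
    have hsub : ∀ x ∈ t.tail, x ∈ a :: b :: t := fun x hx =>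
      .tail a (.tail b (List.mem_of_mem_tail hx))
    have hpos' : ∀ x ∈ t.tail, 1 ≤ x := fun x hx => hpos x (hsub x hx)
    refine ⟨fun p hp => ?_, ih hM.of_cons.of_cons.tail hpos'⟩
    have hp1 := add_two_le_of_mem_tail hM.of_cons
      (blocks_spec k hM.of_cons.of_cons.tail hpos' p hp).1
    have hab : a < b := List.rel_of_pairwise_cons hM (by simp)
    have ha := hpos a (by simp)
    omega
  | case4 a b t hlong ih =>
    simp only [greedyBlocks, if_neg hlong]
    exact ih hM.of_cons (fun x hx => hpos x (.tail a hx))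

theorem length_add_mul_gaps_le {M : List ℕ} {c j : ℕ} (hM : M.Pairwise (· < ·))
    (hbd : ∀ x ∈ M, c ≤ x ∧ x < j) :
    M.length + 2 * k * (greedyBlocks k M).2 ≤ j - c := by
  induction M using greedyBlocks.induct k generalizing c with
  | case1 => simp [greedyBlocks]
  | case2 a =>
    have := hbd a (by simp)
    simp only [greedyBlocks, List.length_singleton, mul_zero, add_zero]
    omega
  | case3 a b t hshort ih =>
    simp only [greedyBlocks, if_pos hshort, List.length_cons]
    have ha := hbd a (by simp)
    have hb := hbd b (by simp)
    have hab : a < b := List.rel_of_pairwise_cons hM (by simp)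
    obtain _ | ⟨d, t⟩ := t
    · simp only [List.tail_nil, greedyBlocks, List.length_nil, mul_zero, add_zero]
      omega
    · have hd := hbd d (by simp)
      have hbd_lt : b < d := List.rel_of_pairwise_cons hM.of_cons (by simp)
      have := ih (c := c + 3) hM.of_cons.of_cons.of_cons fun x hx =>
        ⟨by have := add_two_le_of_mem_tail hM.of_cons (by simpa using hx); omega,
          (hbd x (.tail a (.tail b (List.mem_of_mem_tail hx)))).2⟩
      simp only [List.tail_cons, List.length_cons] at this ⊢
      omega
  | case4 a b t hlong ih =>
    simp only [greedyBlocks, if_neg hlong, List.length_cons]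
    have ha := hbd a (by simp)
    have hb := hbd b (by simp)
    have := ih (c := c + 2 * k + 2) hM.of_cons fun x hx =>
      ⟨by
        rcases List.mem_cons.mp hx with rfl | hx
        · omega
        · have := List.rel_of_pairwise_cons hM.of_cons hx; omega,
       (hbd x (.tail a hx)).2⟩
    simp only [List.length_cons] at this
    rw [mul_add, mul_one]
    omega

end greedyBlocks

theorem disjoint_Ico_of_pairwise_add_le {l : List (ℕ × ℕ)}
    (h : l.Pairwise fun p p' => p.1 + p.2 ≤ p'.1) :
    ∀ p ∈ l, ∀ p' ∈ l, p ≠ p' →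
      Disjoint (Finset.Ico p.1 (p.1 + p.2)) (Finset.Ico p'.1 (p'.1 + p'.2)) := by
  have : Std.Symm fun p p' : ℕ × ℕ =>
      Disjoint (Finset.Ico p.1 (p.1 + p.2)) (Finset.Ico p'.1 (p'.1 + p'.2)) :=
    ⟨fun _ _ h => h.symm⟩
  exact (h.imp fun hle => (Finset.Ico_disjoint_Ico_consecutive _ _ _).mono_right
    (Finset.Ico_subset_Ico_left hle)).forall

theorem exists_disjoint_blocks (k : ℕ) {M : List ℕ} {j : ℕ} (hM : M.Pairwise (· < ·))
    (hbd : ∀ x ∈ M, 1 ≤ x ∧ x < j) :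
    ∃ (B : Finset (ℕ × ℕ)) (g : ℕ),
      (∀ p ∈ B, 2 ≤ p.2 ∧ p.2 ≤ 2 * k + 3 ∧ p.1 + p.2 ≤ j ∧ p.1 + 1 ∈ M ∧ p.1 + p.2 - 1 ∈ M) ∧
      (∀ p ∈ B, ∀ p' ∈ B, p ≠ p' →
        Disjoint (Finset.Ico p.1 (p.1 + p.2)) (Finset.Ico p'.1 (p'.1 + p'.2))) ∧
      M.length ≤ 3 * B.card + g + 1 ∧ M.length + 2 * k * g ≤ j - 1 := by
  classical
  have hpos : ∀ x ∈ M, 1 ≤ x := fun x hx => (hbd x hx).1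
  have hspec := greedyBlocks.blocks_spec k hM hpos
  have hsep := greedyBlocks.pairwise_blocks k hM hpos
  have hnodup : (greedyBlocks k M).1.Nodup := hsep.imp_of_mem fun hp _ hle heq => by
    subst heq
    have := (hspec _ hp).2.2.1
    omega
  refine ⟨(greedyBlocks k M).1.toFinset, (greedyBlocks k M).2, fun p hp => ?_,
    by simpa using disjoint_Ico_of_pairwise_add_le hsep, ?_,
    greedyBlocks.length_add_mul_gaps_le k hM hbd⟩
  · obtain ⟨h1, h2, h3, h4⟩ := hspec p (List.mem_toFinset.1 hp)
    have := (hbd _ h2).2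
    exact ⟨h3, h4, by omega, h1, h2⟩
  · rw [List.toFinset_card_of_nodup hnodup]
    exact greedyBlocks.length_le k M

theorem block_count_bound_general
    (j k l : ℕ) (hk : 1 ≤ k)
    (q : ℕ → ℕ)
    (r : ℕ) (hr : r = ((Finset.range j).filter (fun n => q n = 2)).card)
    (hl : ∀ B : Finset (ℕ × ℕ),
      (∀ p ∈ B, 2 ≤ p.2 ∧ p.2 ≤ 2 * k + 3 ∧ p.1 + p.2 ≤ j ∧
        q (p.1 + 1) = 2 ∧ q (p.1 + p.2 - 1) = 2) →
      (∀ p ∈ B, ∀ p' ∈ B, p ≠ p' →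
        Disjoint (Finset.Ico p.1 (p.1 + p.2)) (Finset.Ico p'.1 (p'.1 + p'.2))) →
      B.card ≤ l) :
    (r : ℝ) ≤ 3 * l + 3 + (j - r) / (2 * k) := by
  set L := (List.range j).filter (fun n => q n = 2) with hL
  have hrL : r = L.length := hr.trans rfl
  have hmem : ∀ x, x ∈ L ↔ x < j ∧ q x = 2 := by simp [hL]
  have hsorted : L.Pairwise (· < ·) := List.pairwise_lt_range.filter _
  rcases hL' : L with _ | ⟨x₀, M⟩
  · simp only [hrL, hL', List.length_nil, CharP.cast_eq_zero, sub_zero]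
    positivity
  rw [hL'] at hsorted
  have hMmem : ∀ x ∈ M, x < j ∧ q x = 2 := fun x hx => (hmem x).1 (hL' ▸ .tail x₀ hx)
  obtain ⟨B, g, hB, hdisj, hlen, hgaps⟩ := exists_disjoint_blocks k hsorted.of_cons
    fun x hx => ⟨Nat.one_le_of_lt (List.rel_of_pairwise_cons hsorted hx), (hMmem x hx).1⟩
  have hcard : B.card ≤ l := hl B (fun p hp => by
    obtain ⟨h1, h2, h3, h4, h5⟩ := hB p hp
    exact ⟨h1, h2, h3, (hMmem _ h4).2, (hMmem _ h5).2⟩) hdisj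
  have hr' : r = M.length + 1 := by simp [hrL, hL']
  have hj : x₀ < j := ((hmem x₀).1 (hL' ▸ List.mem_cons_self ..)).1
  have hg : (g : ℝ) ≤ (j - r) / (2 * k) := by
    rw [le_div_iff₀ (by positivity), le_sub_iff_add_le, mul_comm]
    exact_mod_cast (by omega : 2 * k * g + r ≤ j)
  have : (r : ℝ) ≤ 3 * l + g + 2 := by exact_mod_cast (by omega : r ≤ 3 * l + g + 2)
  linarith

/-- let `(q n)_{n<j}` take values in `{1,2}` and let `r` be the
number of indices with value `2`.  A "block" is a contiguous sub-chain
`(ν₁, 2, ν₂, …, ν_q, 2)` of length `q + 2 ≤ 2k + 3` (second and last entries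
equal to `2`), encoded by its starting index `s` and its length `len`.
If `l` bounds the cardinality of every pairwise disjoint family of blocks,
then `r ≤ 3l + 3 + (j − r)/(2k)`. -/
theorem block_count_bound
    (j k l : ℕ) (hj : 1 ≤ j) (hk : 1 ≤ k)
    (q : ℕ → ℕ) (hq : ∀ n < j, q n = 1 ∨ q n = 2)
    (r : ℕ) (hr : r = ((Finset.range j).filter (fun n => q n = 2)).card)
    (hl : ∀ B : Finset (ℕ × ℕ),
      (∀ p ∈ B, 2 ≤ p.2 ∧ p.2 ≤ 2 * k + 3 ∧ p.1 + p.2 ≤ j ∧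
        q (p.1 + 1) = 2 ∧ q (p.1 + p.2 - 1) = 2) →
      (∀ p ∈ B, ∀ p' ∈ B, p ≠ p' →
        Disjoint (Finset.Ico p.1 (p.1 + p.2)) (Finset.Ico p'.1 (p'.1 + p'.2))) →
      B.card ≤ l) :
    (r : ℝ) ≤ 3 * l + 3 + (j - r) / (2 * k) :=
  block_count_bound_general j k l hk q r hr hl
end

section
/- Newest vertex bisection iterated: if a triangle T with vertices (A,B,C) is bisected from C to the midpoint M of AB (one arbitrary bisection), and then each resulting triangle is bisected twice more from its newest vertex, then every triangle produced after these three levels of bisection has diameter at most half the diameter of T. -/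
private lemma mid_dist_le {E : Type*} [NormedAddCommGroup E] [NormedSpace ℝ E]
    (z x y : E) {d : ℝ} (h : dist x y ≤ d) :
    dist (midpoint ℝ z x) (midpoint ℝ z y) ≤ d / 2 := by
  have := dist_midpoint_midpoint_le z x z y
  rw [dist_self] at this
  linarith

private lemma diam_triple {E : Type*} [MetricSpace E] {x y z : E} {r : ℝ}
    (hr : 0 ≤ r) (h1 : dist x y ≤ r) (h2 : dist x z ≤ r) (h3 : dist y z ≤ r) :
    Metric.diam ({x, y, z} : Set E) ≤ r := by
  apply Metric.diam_le_of_forall_dist_le hr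
  intro a ha b hb
  simp only [Set.mem_insert_iff, Set.mem_singleton_iff] at ha hb
  rcases ha with rfl | rfl | rfl <;> rcases hb with rfl | rfl | rfl <;>
    first
      | simpa [dist_self] using hr
      | assumption
      | (rw [dist_comm]; assumption)

/-- after one arbitrary bisection (from `C` to the midpoint `M`
of `AB`) followed by two rounds of newest vertex bisections, each of the 8
resulting triangles has diameter at most half the diameter of the original
triangle `conv{A,B,C}` (Euclidean plane). -/
theorem BNN_halves_diameter
    (A B C : EuclideanSpace ℝ (Fin 2))
    (M m₁ m₂ p₁ p₂ p₃ : EuclideanSpace ℝ (Fin 2))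
    (hM : M = midpoint ℝ A B)
    (hm₁ : m₁ = midpoint ℝ A C) (hm₂ : m₂ = midpoint ℝ B C)
    (hp₁ : p₁ = midpoint ℝ M A) (hp₂ : p₂ = midpoint ℝ M C)
    (hp₃ : p₃ = midpoint ℝ M B) :
    ∀ t ∈ [({m₁, M, p₁} : Set (EuclideanSpace ℝ (Fin 2))), {m₁, p₁, A},
           {m₁, M, p₂}, {m₁, p₂, C},
           {m₂, M, p₃}, {m₂, p₃, B},
           {m₂, M, p₂}, {m₂, p₂, C}],
      Metric.diam (convexHull ℝ t) ≤
        Metric.diam (convexHull ℝ ({A, B, C} : Set (EuclideanSpace ℝ (Fin 2)))) / 2 := by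
  set S : Set (EuclideanSpace ℝ (Fin 2)) := {A, B, C} with hS
  set d : ℝ := Metric.diam S with hd
  have hSb : Bornology.IsBounded S := (Set.toFinite S).isBounded
  have hd0 : 0 ≤ d := Metric.diam_nonneg
  have hAB : dist A B ≤ d := Metric.dist_le_diam_of_mem hSb (by simp [hS]) (by simp [hS])
  have hAC : dist A C ≤ d := Metric.dist_le_diam_of_mem hSb (by simp [hS]) (by simp [hS])
  have hBC : dist B C ≤ d := Metric.dist_le_diam_of_mem hSb (by simp [hS]) (by simp [hS])
  -- distances from M
  have hMA : dist M A ≤ d := by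
    rw [hM, dist_midpoint_left, Real.norm_two]; have := dist_nonneg (x := A) (y := B); linarith
  have hMB : dist M B ≤ d := by
    rw [hM, dist_midpoint_right, Real.norm_two]; have := dist_nonneg (x := A) (y := B); linarith
  have hMC : dist M C ≤ d := by
    have h := dist_midpoint_midpoint_le A B C C
    rw [midpoint_self] at h
    rw [hM]
    have h1 : dist B C ≤ d := hBC
    have h2 : dist A C ≤ d := hAC
    linarith
  have hCM : dist C M ≤ d := by rw [dist_comm]; exact hMC
  have hAM : dist A M ≤ d := by rw [dist_comm]; exact hMA
  have hBM : dist B M ≤ d := by rw [dist_comm]; exact hMB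
  -- pairwise distance bounds among the new vertices
  have h_m₁M : dist m₁ M ≤ d / 2 := by
    rw [hm₁, hM]; exact mid_dist_le A C B (by rw [dist_comm]; exact hBC)
  have h_m₁p₁ : dist m₁ p₁ ≤ d / 2 := by
    rw [hm₁, hp₁, midpoint_comm M A]; exact mid_dist_le A C M hCM
  have h_Mp₁ : dist M p₁ ≤ d / 2 := by
    rw [hp₁, dist_comm, dist_midpoint_left, Real.norm_two]; linarith
  have h_m₁A : dist m₁ A ≤ d / 2 := by
    rw [hm₁, dist_midpoint_left, Real.norm_two]; linarith
  have h_p₁A : dist p₁ A ≤ d / 2 := by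
    rw [hp₁, dist_midpoint_right, Real.norm_two]; linarith
  have h_m₁p₂ : dist m₁ p₂ ≤ d / 2 := by
    rw [hm₁, hp₂, midpoint_comm A C, midpoint_comm M C]
    exact mid_dist_le C A M hAM
  have h_Mp₂ : dist M p₂ ≤ d / 2 := by
    rw [hp₂, dist_comm, dist_midpoint_left, Real.norm_two]; linarith
  have h_m₁C : dist m₁ C ≤ d / 2 := by
    rw [hm₁, dist_midpoint_right, Real.norm_two]; linarith
  have h_p₂C : dist p₂ C ≤ d / 2 := by
    rw [hp₂, dist_midpoint_right, Real.norm_two]; linarith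
  have h_m₂M : dist m₂ M ≤ d / 2 := by
    rw [hm₂, hM, midpoint_comm A B]
    exact mid_dist_le B C A (by rw [dist_comm]; exact hAC)
  have h_m₂p₃ : dist m₂ p₃ ≤ d / 2 := by
    rw [hm₂, hp₃, midpoint_comm M B]
    exact mid_dist_le B C M hCM
  have h_Mp₃ : dist M p₃ ≤ d / 2 := by
    rw [hp₃, dist_comm, dist_midpoint_left, Real.norm_two]; linarith
  have h_m₂B : dist m₂ B ≤ d / 2 := by
    rw [hm₂, dist_midpoint_left, Real.norm_two]; linarith
  have h_p₃B : dist p₃ B ≤ d / 2 := by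
    rw [hp₃, dist_midpoint_right, Real.norm_two]; linarith
  have h_m₂p₂ : dist m₂ p₂ ≤ d / 2 := by
    rw [hm₂, hp₂, midpoint_comm B C, midpoint_comm M C]
    exact mid_dist_le C B M hBM
  have h_m₂C : dist m₂ C ≤ d / 2 := by
    rw [hm₂, dist_midpoint_right, Real.norm_two]; linarith
  have hd2 : 0 ≤ d / 2 := by linarith
  intro t ht
  rw [convexHull_diam, convexHull_diam]
  fin_cases ht
  · exact diam_triple hd2 h_m₁M h_m₁p₁ h_Mp₁
  · exact diam_triple hd2 h_m₁p₁ h_m₁A h_p₁A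
  · exact diam_triple hd2 h_m₁M h_m₁p₂ h_Mp₂
  · exact diam_triple hd2 h_m₁p₂ h_m₁C h_p₂C
  · exact diam_triple hd2 h_m₂M h_m₂p₃ h_Mp₃
  · exact diam_triple hd2 h_m₂p₃ h_m₂B h_p₃B
  · exact diam_triple hd2 h_m₂M h_m₂p₂ h_Mp₂
  · exact diam_triple hd2 h_m₂p₂ h_m₂C h_p₂C
end

section
/- For the quadratic form q(x,y) = x² + 100y² on ℝ², the triangle T with vertices that is equilateral in the metric |w|_q = √(q(w)) achieves ρ_q(T) = 4/√3, where ρ_q(T) = max{|q(a)|,|q(b)|,|q(c)|}/(|T|·√|det q|), with (a,b,c) the edge vectors of T and |T| its area. More generally, for any positive definite quadratic form q and any nondegenerate triangle T, ρ_q(T) ≥ 4/√3. -/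
set_option maxHeartbeats 2000000


/-- for any positive definite quadratic form
`q(w) = Q₀ w₁² + 2 Q₁ w₁w₂ + Q₂ w₂²` and any nondegenerate triangle with edge
vectors `a, b, c` (so `a + b + c = 0`) and area `|T|`, one has
`ρ_q(T) = max{q(a), q(b), q(c)}/(|T| √(det Q)) ≥ 4/√3`; moreover for
`q(x,y) = x² + 100 y²` the bound is attained by a triangle which is
equilateral in the metric `√q`. -/
theorem rho_q_lower_bound_and_attained :
    (∀ Q₀ Q₁ Q₂ : ℝ, 0 < Q₀ → 0 < Q₀ * Q₂ - Q₁ ^ 2 →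
      ∀ a b c : ℝ × ℝ, a + b + c = 0 →
        0 < |a.1 * b.2 - a.2 * b.1| / 2 →
        (4 / Real.sqrt 3) * (|a.1 * b.2 - a.2 * b.1| / 2) *
            Real.sqrt (Q₀ * Q₂ - Q₁ ^ 2) ≤
          max (Q₀ * a.1 ^ 2 + 2 * Q₁ * a.1 * a.2 + Q₂ * a.2 ^ 2)
            (max (Q₀ * b.1 ^ 2 + 2 * Q₁ * b.1 * b.2 + Q₂ * b.2 ^ 2)
              (Q₀ * c.1 ^ 2 + 2 * Q₁ * c.1 * c.2 + Q₂ * c.2 ^ 2))) ∧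
    (∃ a b c : ℝ × ℝ, a + b + c = 0 ∧
      0 < |a.1 * b.2 - a.2 * b.1| / 2 ∧
      (a.1 ^ 2 + 100 * a.2 ^ 2 = b.1 ^ 2 + 100 * b.2 ^ 2) ∧
      (b.1 ^ 2 + 100 * b.2 ^ 2 = c.1 ^ 2 + 100 * c.2 ^ 2) ∧
      max (a.1 ^ 2 + 100 * a.2 ^ 2)
          (max (b.1 ^ 2 + 100 * b.2 ^ 2) (c.1 ^ 2 + 100 * c.2 ^ 2)) =
        (4 / Real.sqrt 3) * (|a.1 * b.2 - a.2 * b.1| / 2) *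
          Real.sqrt (100 : ℝ)) := by
  constructor
  · intro Q₀ Q₁ Q₂ hQ₀ hd a b c habc harea
    have hc1 : c.1 = -(a.1 + b.1) := by
      have h1 := congrArg Prod.fst habc
      simp [Prod.fst_add] at h1
      linarith
    have hc2 : c.2 = -(a.2 + b.2) := by
      have h2 := congrArg Prod.snd habc
      simp [Prod.snd_add] at h2
      linarith
    set D : ℝ := a.1 * b.2 - a.2 * b.1 with hDdef
    set d : ℝ := Q₀ * Q₂ - Q₁ ^ 2 with hddef
    set x : ℝ := Q₀ * a.1 ^ 2 + 2 * Q₁ * a.1 * a.2 + Q₂ * a.2 ^ 2 with hxdef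
    set y : ℝ := Q₀ * b.1 ^ 2 + 2 * Q₁ * b.1 * b.2 + Q₂ * b.2 ^ 2 with hydef
    set z : ℝ := Q₀ * c.1 ^ 2 + 2 * Q₁ * c.1 * c.2 + Q₂ * c.2 ^ 2 with hzdef
    set M : ℝ := max x (max y z) with hMdef
    -- nonnegativity of the quadratic form values
    have hx0 : 0 ≤ x := by
      nlinarith [sq_nonneg (Q₀ * a.1 + Q₁ * a.2), mul_nonneg hd.le (sq_nonneg a.2), hQ₀]
    have hy0 : 0 ≤ y := by
      nlinarith [sq_nonneg (Q₀ * b.1 + Q₁ * b.2), mul_nonneg hd.le (sq_nonneg b.2), hQ₀]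
    have hz0 : 0 ≤ z := by
      nlinarith [sq_nonneg (Q₀ * c.1 + Q₁ * c.2), mul_nonneg hd.le (sq_nonneg c.2), hQ₀]
    have hxM : x ≤ M := le_max_left _ _
    have hyM : y ≤ M := le_trans (le_max_left _ _) (le_max_right _ _)
    have hzM : z ≤ M := le_trans (le_max_right _ _) (le_max_right _ _)
    have hM0 : 0 ≤ M := le_trans hx0 hxM
    -- key algebraic identity (Gram determinant)
    have hid : 4 * d * D ^ 2 = 4 * x * y - (z - x - y) ^ 2 := by
      simp only [hxdef, hydef, hzdef, hddef, hDdef, hc1, hc2]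
      ring
    -- 3M² - (4xy - (z-x-y)²) = (x-y)² + 2z(M-x) + 2z(M-y) + (M-z)(3M-z)
    have halg : 4 * x * y - (z - x - y) ^ 2 ≤ 3 * M ^ 2 := by
      have e1 : (0:ℝ) ≤ (x - y) ^ 2 := sq_nonneg _
      have e2 : (0:ℝ) ≤ z * (M - x) := mul_nonneg hz0 (by linarith)
      have e3 : (0:ℝ) ≤ z * (M - y) := mul_nonneg hz0 (by linarith)
      have e4 : (0:ℝ) ≤ (M - z) * (3 * M - z) := mul_nonneg (by linarith) (by linarith)
      nlinarith [e1, e2, e3, e4]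
    set L : ℝ := 4 / Real.sqrt 3 * (|D| / 2) * Real.sqrt d with hLdef
    have hs3 : (0:ℝ) < Real.sqrt 3 := Real.sqrt_pos.2 (by norm_num)
    have h3 : Real.sqrt 3 ^ 2 = 3 := Real.sq_sqrt (by norm_num)
    have hsd : Real.sqrt d ^ 2 = d := Real.sq_sqrt hd.le
    have hL2 : 3 * L ^ 2 = 4 * d * D ^ 2 := by
      have h1 : L ^ 2 = 4 ^ 2 / Real.sqrt 3 ^ 2 * (|D| ^ 2 / 2 ^ 2) * Real.sqrt d ^ 2 := by
        rw [hLdef]; ring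
      rw [h1, h3, hsd, sq_abs]
      ring
    have hLM : L ^ 2 ≤ M ^ 2 := by nlinarith [hL2, hid, halg]
    have hLpos : 0 < L := by
      have hsdp : (0:ℝ) < Real.sqrt d := Real.sqrt_pos.2 hd
      have h4 : (0:ℝ) < 4 / Real.sqrt 3 := by positivity
      exact mul_pos (mul_pos h4 harea) hsdp
    nlinarith [hLM, hLpos, hM0]
  · have hs3 : (0:ℝ) < Real.sqrt 3 := Real.sqrt_pos.2 (by norm_num)
    have h3 : Real.sqrt 3 ^ 2 = 3 := Real.sq_sqrt (by norm_num)
    refine ⟨(1, 0), (-1/2, Real.sqrt 3 / 20), (-1/2, -(Real.sqrt 3 / 20)), ?_, ?_, ?_, ?_, ?_⟩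
    · show ((1, 0) : ℝ × ℝ) + (-1/2, Real.sqrt 3 / 20) + (-1/2, -(Real.sqrt 3 / 20)) = 0
      simp only [Prod.mk_add_mk, Prod.mk_eq_zero]
      constructor <;> ring
    · show (0:ℝ) < |1 * (Real.sqrt 3 / 20) - 0 * (-1/2)| / 2
      rw [abs_of_pos (by nlinarith [hs3] : (0:ℝ) < 1 * (Real.sqrt 3 / 20) - 0 * (-1/2))]
      nlinarith [hs3]
    · show (1:ℝ) ^ 2 + 100 * 0 ^ 2 = (-1/2) ^ 2 + 100 * (Real.sqrt 3 / 20) ^ 2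
      nlinarith [h3]
    · show (-1/2:ℝ) ^ 2 + 100 * (Real.sqrt 3 / 20) ^ 2
        = (-1/2) ^ 2 + 100 * (-(Real.sqrt 3 / 20)) ^ 2
      ring
    · show max ((1:ℝ) ^ 2 + 100 * 0 ^ 2)
          (max ((-1/2:ℝ) ^ 2 + 100 * (Real.sqrt 3 / 20) ^ 2)
            ((-1/2:ℝ) ^ 2 + 100 * (-(Real.sqrt 3 / 20)) ^ 2)) =
          4 / Real.sqrt 3 * (|1 * (Real.sqrt 3 / 20) - 0 * (-1/2)| / 2) * Real.sqrt (100 : ℝ)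
      have h100 : Real.sqrt (100:ℝ) = 10 := by
        rw [show (100:ℝ) = 10 ^ 2 by norm_num, Real.sqrt_sq (by norm_num)]
      have hb : ((-1/2:ℝ) ^ 2 + 100 * (Real.sqrt 3 / 20) ^ 2) = 1 := by nlinarith [h3]
      have hc : ((-1/2:ℝ) ^ 2 + 100 * (-(Real.sqrt 3 / 20)) ^ 2) = 1 := by nlinarith [h3]
      have hmax : max ((1:ℝ) ^ 2 + 100 * 0 ^ 2)
          (max ((-1/2:ℝ) ^ 2 + 100 * (Real.sqrt 3 / 20) ^ 2)
            ((-1/2:ℝ) ^ 2 + 100 * (-(Real.sqrt 3 / 20)) ^ 2)) = 1 := by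
        rw [hb, hc]; norm_num
      rw [hmax, h100, abs_of_pos (by nlinarith [hs3] : (0:ℝ) < 1 * (Real.sqrt 3 / 20) - 0 * (-1/2))]
      rw [div_mul_eq_mul_div, div_mul_eq_mul_div, eq_comm, div_eq_iff (ne_of_gt hs3)]
      nlinarith [h3]
end
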